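/- Let n ≥ 1. The game of Snort played on the disjoint union of one copy of K_{1,n+1} with centre tinted Blue, one copy of K_{1,n+1} with centre tinted Red (all leaves untinted), and n isolated untinted vertices is equivalent to 0 if n is even, and equivalent to * if n is odd. -/

import Mathlib

/-! `SetTheory.PGame` is no longer in Mathlib; it is reconstructed here with the
meaning it had in Mathlib (December 2024). -/

universe u

namespace SetTheory

/-- Combinatorial pregames (as in the former Mathlib `SetTheory.PGame`). -/
inductive PGame : Type (u + 1)
  | mk : ∀ α β : Type u, (α → PGame) → (β → PGame) → PGame

namespace PGame

/-- The negation of a pregame: Left and Right swap roles. -/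
def neg : PGame.{u} → PGame.{u}
  | mk l r L R => mk r l (fun i => neg (R i)) (fun i => neg (L i))

instance : Neg PGame.{u} := ⟨neg⟩

/-- The pregame `0 = { | }`. -/
instance : Zero PGame.{u} := ⟨mk PEmpty PEmpty PEmpty.elim PEmpty.elim⟩

/-- The pregame `* = {0 | 0}`. -/
def star : PGame.{u} := mk PUnit PUnit (fun _ => 0) (fun _ => 0)

/-- Simultaneous definition of `x ≤ y` (first component) and `x ⧏ y`
(second component): `x ≤ y` iff no `xL ≥ y`... i.e. every `xL ⧏ y` and every
`x ⧏ yR`; `x ⧏ y` iff some `x ≤ yL` or some `xR ≤ y`. -/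
noncomputable def leLf : PGame.{u} → PGame.{u} → Prop × Prop :=
  fun x => PGame.rec (motive := fun _ => PGame.{u} → Prop × Prop)
    (fun _xl _xr _xL _xR ihL ihR y =>
      PGame.rec (motive := fun _ => Prop × Prop)
        (fun _yl _yr _yL _yR jL jR =>
          ((∀ i, (ihL i (mk _yl _yr _yL _yR)).2) ∧ ∀ j, (jR j).2,
            (∃ i, (jL i).1) ∨ ∃ j, (ihR j (mk _yl _yr _yL _yR)).1)) y) x

/-- The order `x ≤ y` on pregames. -/
noncomputable instance : LE PGame.{u} := ⟨fun x y => (leLf x y).1⟩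

/-- Equivalence of pregames: `x ≤ y ∧ y ≤ x`. -/
def Equiv (x y : PGame.{u}) : Prop := x ≤ y ∧ y ≤ x

noncomputable instance : HasEquiv PGame.{u} := ⟨Equiv⟩

end PGame

end SetTheory

open SetTheory

namespace SnortFormal

/-- The state of a vertex in a Snort position: untinted (`free`), tinted Blue,
tinted Red, or removed from play (`dead`). -/
inductive Cell : Type
  | free | blue | red | dead
deriving DecidableEq

/-- The effect on a neighbouring cell of Left playing next to it:
it becomes tinted Blue, and if it was tinted Red it is removed. -/
def tintB : Cell → Cell
  | .free => .blue
  | .blue => .blue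
  | .red  => .dead
  | .dead => .dead

/-- The effect on a neighbouring cell of Right playing next to it. -/
def tintR : Cell → Cell
  | .free => .red
  | .blue => .dead
  | .red  => .red
  | .dead => .dead

/-- The position resulting from Left playing on vertex `v`: `v` is removed and
all of its neighbours are tinted Blue (doubly-tinted vertices are removed). -/
def moveL {V : Type} [DecidableEq V] (G : SimpleGraph V) [DecidableRel G.Adj]
    (c : V → Cell) (v : V) : V → Cell :=
  fun w => if w = v then .dead else if G.Adj v w then tintB (c w) else c w

/-- The position resulting from Right playing on vertex `v`. -/
def moveR {V : Type} [DecidableEq V] (G : SimpleGraph V) [DecidableRel G.Adj]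
    (c : V → Cell) (v : V) : V → Cell :=
  fun w => if w = v then .dead else if G.Adj v w then tintR (c w) else c w

/-- The vertices still present in the position. -/
def aliveSet {V : Type} [Fintype V] (c : V → Cell) : Finset V :=
  Finset.univ.filter (fun v => c v ≠ Cell.dead)

theorem alive_move_lt {V : Type} [Fintype V] [DecidableEq V]
    (G : SimpleGraph V) [DecidableRel G.Adj] (c : V → Cell) (v : V)
    (hv : c v ≠ Cell.dead) (f : Cell → Cell) (hf : f Cell.dead = Cell.dead) :
    (aliveSet (fun w => if w = v then Cell.dead else if G.Adj v w then f (c w) else c w)).card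
      < (aliveSet c).card := by
  apply Finset.card_lt_card
  constructor
  · intro w hw
    simp only [aliveSet, Finset.mem_filter, Finset.mem_univ, true_and] at hw ⊢
    by_cases h : w = v
    · simp [h] at hw
    · simp only [h, if_false] at hw
      by_cases hadj : G.Adj v w
      · simp only [hadj, if_true] at hw
        intro hd
        rw [hd, hf] at hw
        exact hw rfl
      · simpa [hadj] using hw
  · intro hsub
    have hv' : v ∈ aliveSet c := by
      simp [aliveSet, hv]
    have := hsub hv'
    simp [aliveSet] at this

/-- The combinatorial pregame given by playing Snort on the graph `G` with
tinting `c`. Left may play on any vertex that is free or tinted Blue; Right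
may play on any vertex that is free or tinted Red. -/
def snort {V : Type} [Fintype V] [DecidableEq V] (G : SimpleGraph V) [DecidableRel G.Adj]
    (c : V → Cell) : PGame :=
  PGame.mk {v : V // c v = Cell.free ∨ c v = Cell.blue}
    {v : V // c v = Cell.free ∨ c v = Cell.red}
    (fun v => snort G (moveL G c v.1))
    (fun v => snort G (moveR G c v.1))
termination_by (aliveSet c).card
decreasing_by
  · exact alive_move_lt G c v.1 (by rcases v.2 with h | h <;> simp [h]) tintB rfl
  · exact alive_move_lt G c v.1 (by rcases v.2 with h | h <;> simp [h]) tintR rfl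

/-- Build a simple graph from a (not necessarily symmetric) Boolean adjacency
function by symmetrizing and removing loops. -/
def graphOfBool {W : Type} (f : W → W → Bool) : SimpleGraph W where
  Adj u v := u ≠ v ∧ (f u v ∨ f v u)
  symm := ⟨fun _ _ ⟨h1, h2⟩ => ⟨h1.symm, h2.symm⟩⟩
  loopless := ⟨fun _ h => h.1 rfl⟩

instance {W : Type} [DecidableEq W] (f : W → W → Bool) :
    DecidableRel (graphOfBool f).Adj :=
  fun u v => inferInstanceAs (Decidable (u ≠ v ∧ (f u v ∨ f v u)))

/-- The game `{A | B}` with unique Left option `A` and unique Right option `B`. -/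
def ofPair (A B : PGame) : PGame :=
  PGame.mk PUnit PUnit (fun _ => A) (fun _ => B)

/-- The game `±{A, B} = {A, B | −A, −B}`. -/
def pmPair (A B : PGame) : PGame :=
  PGame.mk Bool Bool (fun x => if x then A else B) (fun x => if x then -A else -B)


/-- `s(n)`: the game `0` if `n` is even and `* = {0 | 0}` if `n` is odd. -/
def sgame (n : ℕ) : PGame := if Even n then 0 else PGame.star

/-- The star `K_{1,n}`: centre `none`, leaves `some i`. -/
abbrev starGraph (n : ℕ) : SimpleGraph (Option (Fin n)) :=
  graphOfBool (fun u v =>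
    match u, v with
    | none, some _ => true
    | _, _ => false)

/-- Two disjoint stars `K_{1,n+1}` indexed by `Bool` (centres `.inl (s, none)`)
together with `n` isolated vertices (`.inr`). -/
abbrev twoStarsPlusIsol (n : ℕ) : SimpleGraph ((Bool × Option (Fin (n+1))) ⊕ Fin n) :=
  graphOfBool (fun u v =>
    match u, v with
    | .inl (s, none), .inl (t, some _) => s == t
    | _, _ => false)

end SnortFormal

namespace SetTheory.PGame

def LeftMoves : PGame.{u} → Type u
  | mk l _ _ _ => l

def RightMoves : PGame.{u} → Type u
  | mk _ r _ _ => r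

def moveLeft : (g : PGame.{u}) → LeftMoves g → PGame.{u}
  | mk _ _ L _ => L

def moveRight : (g : PGame.{u}) → RightMoves g → PGame.{u}
  | mk _ _ _ R => R

def LF (x y : PGame.{u}) : Prop := (leLf x y).2

theorem moveLeft_mk {xl xr : Type u} {xL : xl → PGame.{u}} {xR : xr → PGame.{u}} :
    (mk xl xr xL xR).moveLeft = xL := rfl

theorem moveRight_mk {xl xr : Type u} {xL : xl → PGame.{u}} {xR : xr → PGame.{u}} :
    (mk xl xr xL xR).moveRight = xR := rfl

theorem le_iff_forall_lf {x y : PGame.{u}} :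
    x ≤ y ↔ (∀ i, LF (x.moveLeft i) y) ∧ ∀ j, LF x (y.moveRight j) := by
  cases x; cases y; exact Iff.rfl

theorem lf_iff_exists_le {x y : PGame.{u}} :
    LF x y ↔ (∃ i, x ≤ y.moveLeft i) ∨ ∃ j, x.moveRight j ≤ y := by
  cases x; cases y; exact Iff.rfl

theorem le_zero {x : PGame.{u}} : x ≤ 0 ↔ ∀ i, ∃ j, (x.moveLeft i).moveRight j ≤ 0 := by
  rw [le_iff_forall_lf]
  constructor
  · rintro ⟨h, -⟩ i
    rcases lf_iff_exists_le.1 (h i) with ⟨k, -⟩ | ⟨j, hj⟩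
    · exact PEmpty.elim k
    · exact ⟨j, hj⟩
  · intro h
    exact ⟨fun i => lf_iff_exists_le.2 (Or.inr (h i)), fun j => PEmpty.elim j⟩

theorem zero_le {x : PGame.{u}} : 0 ≤ x ↔ ∀ j, ∃ i, 0 ≤ (x.moveRight j).moveLeft i := by
  rw [le_iff_forall_lf]
  constructor
  · rintro ⟨-, h⟩ j
    rcases lf_iff_exists_le.1 (h j) with ⟨i, hi⟩ | ⟨k, -⟩
    · exact ⟨i, hi⟩
    · exact PEmpty.elim k
  · intro h
    exact ⟨fun i => PEmpty.elim i, fun j => lf_iff_exists_le.2 (Or.inl (h j))⟩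

instance : Inhabited star.{u}.LeftMoves := ⟨PUnit.unit⟩

instance : Inhabited star.{u}.RightMoves := ⟨PUnit.unit⟩

theorem star_moveLeft (x : star.{u}.LeftMoves) : star.moveLeft x = 0 := rfl

theorem star_moveRight (x : star.{u}.RightMoves) : star.moveRight x = 0 := rfl

end SetTheory.PGame

namespace SnortFormal

/-! ### Auxiliary machinery for the mirror-strategy argument -/

theorem snort_eq {V : Type} [Fintype V] [DecidableEq V] (G : SimpleGraph V) [DecidableRel G.Adj]
    (c : V → Cell) :
    snort G c = PGame.mk {v : V // c v = Cell.free ∨ c v = Cell.blue}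
      {v : V // c v = Cell.free ∨ c v = Cell.red}
      (fun v => snort G (moveL G c v.1))
      (fun v => snort G (moveR G c v.1)) := by
  rw [snort]

def flipC : Cell → Cell
  | .free => .free
  | .blue => .red
  | .red => .blue
  | .dead => .dead

abbrev VV (n : ℕ) := (Bool × Option (Fin (n+1))) ⊕ Fin n

def sw {n : ℕ} : VV n → VV n
  | .inl (s, x) => .inl (!s, x)
  | .inr i => .inr i

variable {n : ℕ}

lemma sw_sw (v : VV n) : sw (sw v) = v := by
  rcases v with ⟨s, x⟩ | i <;> simp [sw]

lemma sw_eq_sw_iff {a b : VV n} : sw a = sw b ↔ a = b := by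
  constructor
  · intro h
    have := congrArg sw h
    rwa [sw_sw, sw_sw] at this
  · rintro rfl; rfl

lemma sw_eq_iff {a b : VV n} : sw a = b ↔ a = sw b := by
  constructor
  · rintro rfl; exact (sw_sw a).symm
  · rintro rfl; exact sw_sw b

lemma sw_eq_inr {w : VV n} {i : Fin n} : sw w = Sum.inr i ↔ w = Sum.inr i := by
  rcases w with ⟨s, x⟩ | j <;> simp [sw]

lemma not_adj_inr (u : VV n) (i : Fin n) : ¬ (twoStarsPlusIsol n).Adj u (Sum.inr i) := by
  rintro ⟨h1, h2 | h2⟩ <;> rcases u with ⟨s, _ | x⟩ | j <;> simp_all [graphOfBool]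

lemma not_adj_inr' (u : VV n) (i : Fin n) : ¬ (twoStarsPlusIsol n).Adj (Sum.inr i) u :=
  fun h => not_adj_inr u i h.symm

lemma adj_sw (u w : VV n) :
    (twoStarsPlusIsol n).Adj (sw u) (sw w) ↔ (twoStarsPlusIsol n).Adj u w := by
  rcases u with ⟨(_|_), (_|x)⟩ | i <;> rcases w with ⟨(_|_), (_|y)⟩ | j <;>
    simp [sw, graphOfBool]

lemma adj_sw' (v w : VV n) :
    (twoStarsPlusIsol n).Adj v (sw w) ↔ (twoStarsPlusIsol n).Adj (sw v) w := by
  have := adj_sw (sw v) w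
  rwa [sw_sw] at this

lemma not_adj_self_sw (v : VV n) : ¬ (twoStarsPlusIsol n).Adj v (sw v) := by
  rcases v with ⟨(_|_), (_|x)⟩ | i <;> rintro ⟨h1, h2 | h2⟩ <;> simp_all [sw, graphOfBool]

lemma sw_inl_ne (p : Bool × Option (Fin (n+1))) : sw (Sum.inl p : VV n) ≠ Sum.inl p := by
  rcases p with ⟨(_|_), x⟩ <;> simp [sw]
lemma moveL_at_sw (c : VV n → Cell) (p : Bool × Option (Fin (n+1))) :
    moveL (twoStarsPlusIsol n) c (Sum.inl p) (sw (Sum.inl p)) = c (sw (Sum.inl p)) := by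
  simp [moveL, sw_inl_ne p, not_adj_self_sw (Sum.inl p : VV n)]

lemma moveR_at_sw (c : VV n → Cell) (p : Bool × Option (Fin (n+1))) :
    moveR (twoStarsPlusIsol n) c (Sum.inl p) (sw (Sum.inl p)) = c (sw (Sum.inl p)) := by
  simp [moveR, sw_inl_ne p, not_adj_self_sw (Sum.inl p : VV n)]

lemma moveL_inl_inr (c : VV n → Cell) (q : Bool × Option (Fin (n+1))) (i : Fin n) :
    moveL (twoStarsPlusIsol n) c (Sum.inl q) (Sum.inr i) = c (Sum.inr i) := by
  simp [moveL, not_adj_inr (Sum.inl q : VV n) i]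

lemma moveR_inl_inr (c : VV n → Cell) (q : Bool × Option (Fin (n+1))) (i : Fin n) :
    moveR (twoStarsPlusIsol n) c (Sum.inl q) (Sum.inr i) = c (Sum.inr i) := by
  simp [moveR, not_adj_inr (Sum.inl q : VV n) i]

def Symm (c : VV n → Cell) : Prop := ∀ v, c (sw v) = flipC (c v)

lemma symm_mirror_LR (c : VV n → Cell) (h : Symm c) (v : VV n) :
    Symm (moveR (twoStarsPlusIsol n) (moveL (twoStarsPlusIsol n) c v) (sw v)) := by
  intro w
  simp only [moveR, moveL, sw_eq_sw_iff, sw_eq_iff, sw_sw, adj_sw, adj_sw', h w]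
  split_ifs <;> (try rfl) <;> (cases c w <;> rfl)

lemma symm_mirror_RL (c : VV n → Cell) (h : Symm c) (v : VV n) :
    Symm (moveL (twoStarsPlusIsol n) (moveR (twoStarsPlusIsol n) c v) (sw v)) := by
  intro w
  simp only [moveR, moveL, sw_eq_sw_iff, sw_eq_iff, sw_sw, adj_sw, adj_sw', h w]
  split_ifs <;> (try rfl) <;> (cases c w <;> rfl)

lemma symm_move_inr (f : Cell → Cell) (c : VV n → Cell) (h : Symm c) (i : Fin n) :
    Symm (fun w => if w = Sum.inr i then Cell.dead
      else if (twoStarsPlusIsol n).Adj (Sum.inr i) w then f (c w) else c w) := by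
  intro w
  simp only [sw_eq_inr, h w, not_adj_inr', if_false, ite_false]
  split_ifs <;> rfl

def kk (c : VV n → Cell) : ℕ :=
  (Finset.univ.filter fun i : Fin n => c (Sum.inr i) = Cell.free).card

lemma kk_congr {c c' : VV n → Cell} (h : ∀ i, c' (Sum.inr i) = c (Sum.inr i)) :
    kk c' = kk c := by
  unfold kk
  congr 1
  apply Finset.filter_congr
  intro i _
  rw [h i]

lemma kk_move_inr (f : Cell → Cell) (c : VV n → Cell) (i : Fin n)
    (hi : c (Sum.inr i) = Cell.free) :
    kk (fun w => if w = Sum.inr i then Cell.dead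
      else if (twoStarsPlusIsol n).Adj (Sum.inr i) w then f (c w) else c w) = kk c - 1 := by
  unfold kk
  have hset : (Finset.univ.filter fun j : Fin n =>
        (if (Sum.inr j : VV n) = Sum.inr i then Cell.dead
          else if (twoStarsPlusIsol n).Adj (Sum.inr i) (Sum.inr j) then f (c (Sum.inr j))
          else c (Sum.inr j)) = Cell.free)
      = (Finset.univ.filter fun j : Fin n => c (Sum.inr j) = Cell.free).erase i := by
    ext j
    by_cases hj : j = i <;> simp [hj, not_adj_inr']
  rw [hset, Finset.card_erase_of_mem]
  simp [hi]

lemma kk_pos {c : VV n → Cell} (i : Fin n) (hi : c (Sum.inr i) = Cell.free) : kk c ≠ 0 :=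
  Finset.card_ne_zero_of_mem (Finset.mem_filter.mpr ⟨Finset.mem_univ i, hi⟩)

lemma exists_free_inr (c : VV n → Cell) (h : kk c ≠ 0) :
    ∃ i : Fin n, c (Sum.inr i) = Cell.free := by
  obtain ⟨i, hi⟩ := Finset.card_pos.mp
    (show 0 < (Finset.univ.filter fun i : Fin n => c (Sum.inr i) = Cell.free).card from
      Nat.pos_of_ne_zero h)
  exact ⟨i, (Finset.mem_filter.mp hi).2⟩

lemma symm_inr_not_blue {c : VV n → Cell} (h : Symm c) (i : Fin n) :
    c (Sum.inr i) = Cell.free ∨ c (Sum.inr i) = Cell.dead := by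
  have hh := h (Sum.inr i)
  rw [show sw (Sum.inr i : VV n) = Sum.inr i from rfl] at hh
  cases hc : c (Sum.inr i) with
  | free => exact Or.inl rfl
  | dead => exact Or.inr rfl
  | blue => rw [hc] at hh; exact absurd hh (by decide)
  | red => rw [hc] at hh; exact absurd hh (by decide)

lemma free_of_symm_L {c : VV n → Cell} (h : Symm c) (i : Fin n)
    (hv : c (Sum.inr i) = Cell.free ∨ c (Sum.inr i) = Cell.blue) :
    c (Sum.inr i) = Cell.free := by
  rcases symm_inr_not_blue h i with h1 | h1
  · exact h1
  · rcases hv with hv | hv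
    · exact hv
    · rw [hv] at h1; exact absurd h1 (by decide)

lemma free_of_symm_R {c : VV n → Cell} (h : Symm c) (i : Fin n)
    (hv : c (Sum.inr i) = Cell.free ∨ c (Sum.inr i) = Cell.red) :
    c (Sum.inr i) = Cell.free := by
  rcases symm_inr_not_blue h i with h1 | h1
  · exact h1
  · rcases hv with hv | hv
    · exact hv
    · rw [hv] at h1; exact absurd h1 (by decide)
lemma stepLR (c : VV n → Cell) (hsym : Symm c) (p : Bool × Option (Fin (n+1)))
    (hv : c (Sum.inl p) = Cell.free ∨ c (Sum.inl p) = Cell.blue) :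
    (moveL (twoStarsPlusIsol n) c (Sum.inl p) (sw (Sum.inl p)) = Cell.free ∨
      moveL (twoStarsPlusIsol n) c (Sum.inl p) (sw (Sum.inl p)) = Cell.red) ∧
    Symm (moveR (twoStarsPlusIsol n) (moveL (twoStarsPlusIsol n) c (Sum.inl p)) (sw (Sum.inl p))) ∧
    kk (moveR (twoStarsPlusIsol n) (moveL (twoStarsPlusIsol n) c (Sum.inl p)) (sw (Sum.inl p))) = kk c ∧
    (aliveSet (moveR (twoStarsPlusIsol n) (moveL (twoStarsPlusIsol n) c (Sum.inl p)) (sw (Sum.inl p)))).card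
      < (aliveSet c).card := by
  have h1 : moveL (twoStarsPlusIsol n) c (Sum.inl p) (sw (Sum.inl p)) = c (sw (Sum.inl p)) :=
    moveL_at_sw c p
  have h2 : c (sw (Sum.inl p)) = flipC (c (Sum.inl p)) := hsym _
  refine ⟨?_, symm_mirror_LR c hsym _, ?_, ?_⟩
  · rw [h1, h2]
    rcases hv with hv | hv <;> rw [hv]
    · exact Or.inl rfl
    · exact Or.inr rfl
  · apply kk_congr
    intro i
    rcases p with ⟨s, x⟩
    rw [show sw (Sum.inl (s, x) : VV n) = Sum.inl (!s, x) from rfl,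
      moveR_inl_inr, moveL_inl_inr]
  · have d1 : (aliveSet (moveL (twoStarsPlusIsol n) c (Sum.inl p))).card < (aliveSet c).card :=
      alive_move_lt _ c _ (by rcases hv with hv | hv <;> rw [hv] <;> decide) tintB rfl
    have d2 : (aliveSet (moveR (twoStarsPlusIsol n) (moveL (twoStarsPlusIsol n) c (Sum.inl p))
        (sw (Sum.inl p)))).card < (aliveSet (moveL (twoStarsPlusIsol n) c (Sum.inl p))).card :=
      alive_move_lt _ _ _ (by rw [h1, h2]; rcases hv with hv | hv <;> rw [hv] <;> decide) tintR rfl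
    omega

lemma stepRL (c : VV n → Cell) (hsym : Symm c) (p : Bool × Option (Fin (n+1)))
    (hv : c (Sum.inl p) = Cell.free ∨ c (Sum.inl p) = Cell.red) :
    (moveR (twoStarsPlusIsol n) c (Sum.inl p) (sw (Sum.inl p)) = Cell.free ∨
      moveR (twoStarsPlusIsol n) c (Sum.inl p) (sw (Sum.inl p)) = Cell.blue) ∧
    Symm (moveL (twoStarsPlusIsol n) (moveR (twoStarsPlusIsol n) c (Sum.inl p)) (sw (Sum.inl p))) ∧
    kk (moveL (twoStarsPlusIsol n) (moveR (twoStarsPlusIsol n) c (Sum.inl p)) (sw (Sum.inl p))) = kk c ∧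
    (aliveSet (moveL (twoStarsPlusIsol n) (moveR (twoStarsPlusIsol n) c (Sum.inl p)) (sw (Sum.inl p)))).card
      < (aliveSet c).card := by
  have h1 : moveR (twoStarsPlusIsol n) c (Sum.inl p) (sw (Sum.inl p)) = c (sw (Sum.inl p)) :=
    moveR_at_sw c p
  have h2 : c (sw (Sum.inl p)) = flipC (c (Sum.inl p)) := hsym _
  refine ⟨?_, symm_mirror_RL c hsym _, ?_, ?_⟩
  · rw [h1, h2]
    rcases hv with hv | hv <;> rw [hv]
    · exact Or.inl rfl
    · exact Or.inr rfl
  · apply kk_congr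
    intro i
    rcases p with ⟨s, x⟩
    rw [show sw (Sum.inl (s, x) : VV n) = Sum.inl (!s, x) from rfl,
      moveL_inl_inr, moveR_inl_inr]
  · have d1 : (aliveSet (moveR (twoStarsPlusIsol n) c (Sum.inl p))).card < (aliveSet c).card :=
      alive_move_lt _ c _ (by rcases hv with hv | hv <;> rw [hv] <;> decide) tintR rfl
    have d2 : (aliveSet (moveL (twoStarsPlusIsol n) (moveR (twoStarsPlusIsol n) c (Sum.inl p))
        (sw (Sum.inl p)))).card < (aliveSet (moveR (twoStarsPlusIsol n) c (Sum.inl p))).card :=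
      alive_move_lt _ _ _ (by rw [h1, h2]; rcases hv with hv | hv <;> rw [hv] <;> decide) tintB rfl
    omega
lemma mod2_one_of_not_even {m : ℕ} (h : ¬ Even m) : m % 2 = 1 := by
  rcases Nat.even_or_odd m with he | ho
  · exact absurd he h
  · exact Nat.odd_iff.mp ho

theorem main_lemma (n : ℕ) : ∀ N (c : VV n → Cell), (aliveSet c).card < N → Symm c →
    (Even (kk c) → snort (twoStarsPlusIsol n) c ≈ 0) ∧
    (¬ Even (kk c) → snort (twoStarsPlusIsol n) c ≈ PGame.star) := by
  intro N
  induction N with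
  | zero => intro c h; exact absurd h (Nat.not_lt_zero _)
  | succ N IH =>
    intro c hcard hsym
    have hIH : ∀ c' : VV n → Cell, (aliveSet c').card < (aliveSet c).card → Symm c' →
        (Even (kk c') → snort (twoStarsPlusIsol n) c' ≈ 0) ∧
        (¬ Even (kk c') → snort (twoStarsPlusIsol n) c' ≈ PGame.star) :=
      fun c' hlt hs => IH c' (by omega) hs
    constructor
    · -- even case : ≈ 0
      intro hkeven
      have hk0 : kk c % 2 = 0 := Nat.even_iff.mp hkeven
      constructor
      · -- snort c ≤ 0
        rw [snort_eq, PGame.le_zero]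
        rintro ⟨v, hv⟩
        simp only [PGame.moveLeft_mk]
        rcases v with p | i
        · obtain ⟨hleg, hsy, hkk, hlt⟩ := stepLR c hsym p hv
          rw [snort_eq]
          exact ⟨⟨sw (Sum.inl p), hleg⟩,
            ((hIH _ hlt hsy).1 (by rw [hkk]; exact hkeven)).1⟩
        · have hfree : c (Sum.inr i) = Cell.free := free_of_symm_L hsym i hv
          have hk1 : kk (moveL (twoStarsPlusIsol n) c (Sum.inr i)) = kk c - 1 :=
            kk_move_inr tintB c i hfree
          have hkne : kk c ≠ 0 := kk_pos i hfree
          have hsy1 : Symm (moveL (twoStarsPlusIsol n) c (Sum.inr i)) :=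
            symm_move_inr tintB c hsym i
          have hk1ne : kk (moveL (twoStarsPlusIsol n) c (Sum.inr i)) ≠ 0 := by
            rw [hk1]; omega
          obtain ⟨j, hj⟩ := exists_free_inr _ hk1ne
          have hsy2 : Symm (moveR (twoStarsPlusIsol n)
              (moveL (twoStarsPlusIsol n) c (Sum.inr i)) (Sum.inr j)) :=
            symm_move_inr tintR _ hsy1 j
          have hk2 : kk (moveR (twoStarsPlusIsol n)
              (moveL (twoStarsPlusIsol n) c (Sum.inr i)) (Sum.inr j))
              = kk (moveL (twoStarsPlusIsol n) c (Sum.inr i)) - 1 :=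
            kk_move_inr tintR _ j hj
          have hlt1 : (aliveSet (moveL (twoStarsPlusIsol n) c (Sum.inr i))).card
              < (aliveSet c).card :=
            alive_move_lt _ c _ (by rw [hfree]; decide) tintB rfl
          have hlt2 : (aliveSet (moveR (twoStarsPlusIsol n)
              (moveL (twoStarsPlusIsol n) c (Sum.inr i)) (Sum.inr j))).card
              < (aliveSet (moveL (twoStarsPlusIsol n) c (Sum.inr i))).card :=
            alive_move_lt _ _ _ (by rw [hj]; decide) tintR rfl
          rw [snort_eq]
          exact ⟨⟨Sum.inr j, Or.inl hj⟩,
            ((hIH _ (by omega) hsy2).1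
              (by rw [hk2, hk1, Nat.even_iff]; omega)).1⟩
      · -- 0 ≤ snort c
        rw [snort_eq, PGame.zero_le]
        rintro ⟨v, hv⟩
        simp only [PGame.moveRight_mk]
        rcases v with p | i
        · obtain ⟨hleg, hsy, hkk, hlt⟩ := stepRL c hsym p hv
          rw [snort_eq]
          exact ⟨⟨sw (Sum.inl p), hleg⟩,
            ((hIH _ hlt hsy).1 (by rw [hkk]; exact hkeven)).2⟩
        · have hfree : c (Sum.inr i) = Cell.free := free_of_symm_R hsym i hv
          have hk1 : kk (moveR (twoStarsPlusIsol n) c (Sum.inr i)) = kk c - 1 :=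
            kk_move_inr tintR c i hfree
          have hkne : kk c ≠ 0 := kk_pos i hfree
          have hsy1 : Symm (moveR (twoStarsPlusIsol n) c (Sum.inr i)) :=
            symm_move_inr tintR c hsym i
          have hk1ne : kk (moveR (twoStarsPlusIsol n) c (Sum.inr i)) ≠ 0 := by
            rw [hk1]; omega
          obtain ⟨j, hj⟩ := exists_free_inr _ hk1ne
          have hsy2 : Symm (moveL (twoStarsPlusIsol n)
              (moveR (twoStarsPlusIsol n) c (Sum.inr i)) (Sum.inr j)) :=
            symm_move_inr tintB _ hsy1 j
          have hk2 : kk (moveL (twoStarsPlusIsol n)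
              (moveR (twoStarsPlusIsol n) c (Sum.inr i)) (Sum.inr j))
              = kk (moveR (twoStarsPlusIsol n) c (Sum.inr i)) - 1 :=
            kk_move_inr tintB _ j hj
          have hlt1 : (aliveSet (moveR (twoStarsPlusIsol n) c (Sum.inr i))).card
              < (aliveSet c).card :=
            alive_move_lt _ c _ (by rw [hfree]; decide) tintR rfl
          have hlt2 : (aliveSet (moveL (twoStarsPlusIsol n)
              (moveR (twoStarsPlusIsol n) c (Sum.inr i)) (Sum.inr j))).card
              < (aliveSet (moveR (twoStarsPlusIsol n) c (Sum.inr i))).card :=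
            alive_move_lt _ _ _ (by rw [hj]; decide) tintB rfl
          rw [snort_eq]
          exact ⟨⟨Sum.inr j, Or.inl hj⟩,
            ((hIH _ (by omega) hsy2).1
              (by rw [hk2, hk1, Nat.even_iff]; omega)).2⟩
    · -- odd case : ≈ star
      intro hkodd
      have hk1mod : kk c % 2 = 1 := mod2_one_of_not_even hkodd
      have hkne : kk c ≠ 0 := by omega
      constructor
      · -- snort c ≤ star
        rw [snort_eq, PGame.le_iff_forall_lf]
        constructor
        · rintro ⟨v, hv⟩
          simp only [PGame.moveLeft_mk]
          rcases v with p | i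
          · obtain ⟨hleg, hsy, hkk, hlt⟩ := stepLR c hsym p hv
            refine PGame.lf_iff_exists_le.2 (Or.inr ?_)
            rw [snort_eq]
            exact ⟨⟨sw (Sum.inl p), hleg⟩,
              ((hIH _ hlt hsy).2 (by rw [hkk]; exact hkodd)).1⟩
          · have hfree : c (Sum.inr i) = Cell.free := free_of_symm_L hsym i hv
            have hk1 : kk (moveL (twoStarsPlusIsol n) c (Sum.inr i)) = kk c - 1 :=
              kk_move_inr tintB c i hfree
            have hsy1 : Symm (moveL (twoStarsPlusIsol n) c (Sum.inr i)) :=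
              symm_move_inr tintB c hsym i
            have hlt1 : (aliveSet (moveL (twoStarsPlusIsol n) c (Sum.inr i))).card
                < (aliveSet c).card :=
              alive_move_lt _ c _ (by rw [hfree]; decide) tintB rfl
            refine PGame.lf_iff_exists_le.2 (Or.inl ⟨default, ?_⟩)
            rw [PGame.star_moveLeft]
            exact ((hIH _ hlt1 hsy1).1 (by rw [hk1, Nat.even_iff]; omega)).1
        · intro j
          rw [PGame.star_moveRight]
          refine PGame.lf_iff_exists_le.2 (Or.inr ?_)
          obtain ⟨i, hi⟩ := exists_free_inr c hkne
          have hsy1 : Symm (moveR (twoStarsPlusIsol n) c (Sum.inr i)) :=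
            symm_move_inr tintR c hsym i
          have hk1 : kk (moveR (twoStarsPlusIsol n) c (Sum.inr i)) = kk c - 1 :=
            kk_move_inr tintR c i hi
          have hlt1 : (aliveSet (moveR (twoStarsPlusIsol n) c (Sum.inr i))).card
              < (aliveSet c).card :=
            alive_move_lt _ c _ (by rw [hi]; decide) tintR rfl
          exact ⟨⟨Sum.inr i, Or.inl hi⟩,
            ((hIH _ hlt1 hsy1).1 (by rw [hk1, Nat.even_iff]; omega)).1⟩
      · -- star ≤ snort c
        rw [snort_eq, PGame.le_iff_forall_lf]
        constructor
        · intro j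
          rw [PGame.star_moveLeft]
          refine PGame.lf_iff_exists_le.2 (Or.inl ?_)
          obtain ⟨i, hi⟩ := exists_free_inr c hkne
          have hsy1 : Symm (moveL (twoStarsPlusIsol n) c (Sum.inr i)) :=
            symm_move_inr tintB c hsym i
          have hk1 : kk (moveL (twoStarsPlusIsol n) c (Sum.inr i)) = kk c - 1 :=
            kk_move_inr tintB c i hi
          have hlt1 : (aliveSet (moveL (twoStarsPlusIsol n) c (Sum.inr i))).card
              < (aliveSet c).card :=
            alive_move_lt _ c _ (by rw [hi]; decide) tintB rfl
          exact ⟨⟨Sum.inr i, Or.inl hi⟩,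
            ((hIH _ hlt1 hsy1).1 (by rw [hk1, Nat.even_iff]; omega)).2⟩
        · rintro ⟨v, hv⟩
          simp only [PGame.moveRight_mk]
          rcases v with p | i
          · obtain ⟨hleg, hsy, hkk, hlt⟩ := stepRL c hsym p hv
            refine PGame.lf_iff_exists_le.2 (Or.inl ?_)
            rw [snort_eq]
            exact ⟨⟨sw (Sum.inl p), hleg⟩,
              ((hIH _ hlt hsy).2 (by rw [hkk]; exact hkodd)).2⟩
          · have hfree : c (Sum.inr i) = Cell.free := free_of_symm_R hsym i hv
            have hk1 : kk (moveR (twoStarsPlusIsol n) c (Sum.inr i)) = kk c - 1 :=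
              kk_move_inr tintR c i hfree
            have hsy1 : Symm (moveR (twoStarsPlusIsol n) c (Sum.inr i)) :=
              symm_move_inr tintR c hsym i
            have hlt1 : (aliveSet (moveR (twoStarsPlusIsol n) c (Sum.inr i))).card
                < (aliveSet c).card :=
              alive_move_lt _ c _ (by rw [hfree]; decide) tintR rfl
            refine PGame.lf_iff_exists_le.2 (Or.inr ⟨default, ?_⟩)
            rw [PGame.star_moveRight]
            exact ((hIH _ hlt1 hsy1).1 (by rw [hk1, Nat.even_iff]; omega)).2
/-- `K_{1,n+1}` with Blue centre, plus `K_{1,n+1}` with Red centre,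
plus `n` isolated untinted vertices, gives `0` if `n` is even and `*` if `n` is
odd. -/
theorem snort_blue_star_red_star_isol (n : ℕ) (hn : 1 ≤ n) :
    snort (twoStarsPlusIsol n)
        (fun p => match p with
          | .inl (false, none) => Cell.blue
          | .inl (true, none) => Cell.red
          | .inl (_, some _) => Cell.free
          | .inr _ => Cell.free)
      ≈ (if Even n then 0 else PGame.star) := by
  have hsym : Symm (fun p : VV n => match p with
      | .inl (false, none) => Cell.blue
      | .inl (true, none) => Cell.red
      | .inl (_, some _) => Cell.free
      | .inr _ => Cell.free) := by
    rintro (⟨(_|_), (_|x)⟩ | i) <;> rfl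
  have hkk : kk (fun p : VV n => match p with
      | .inl (false, none) => Cell.blue
      | .inl (true, none) => Cell.red
      | .inl (_, some _) => Cell.free
      | .inr _ => Cell.free) = n := by
    unfold kk
    rw [Finset.filter_true_of_mem (fun i _ => rfl)]
    simp
  have h := main_lemma n ((aliveSet (fun p : VV n => match p with
      | .inl (false, none) => Cell.blue
      | .inl (true, none) => Cell.red
      | .inl (_, some _) => Cell.free
      | .inr _ => Cell.free)).card + 1) _ (Nat.lt_succ_self _) hsym
  by_cases hev : Even n
  · rw [if_pos hev]
    exact h.1 (by rw [hkk]; exact hev)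
  · rw [if_neg hev]
    exact h.2 (by rw [hkk]; exact hev)
end SnortFormal
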